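/- arXiv:2403.20029 — 7 statements merged into one kernel-verified Lean document; each statement's English description precedes it below -/
import Mathlib

section
/- Let μ > 0 and x_r ≥ 0 be real numbers and ω ≥ 0 be real, and assume √(x_r²·ω/(2μ)) < π. Then the principal argument of the complex number exp(−((x_r²/μ)·ω·I)^(1/2)) equals −√(x_r²·ω/(2μ)). In other words, the phase of the diffusion system G(s) = exp(−√(x_r²·s/μ)) at s = jω is ∠G(jω) = −√(x_r²ω/(2μ)). -/
open Complex

theorem ofReal_mul_I_cpow_half {r : ℝ} (hr : 0 ≤ r) :
    ((r : ℂ) * I) ^ ((1 : ℂ) / 2) = (Real.sqrt (r / 2) : ℂ) * (1 + I) := by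
  rcases hr.eq_or_lt with rfl | hr
  · simp
  have hsq : (r : ℂ) * I = ((Real.sqrt (r / 2) : ℂ) * (1 + I)) ^ 2 := by
    have hs : (Real.sqrt (r / 2) : ℂ) ^ 2 = r / 2 := by
      rw [← ofReal_pow, Real.sq_sqrt (by positivity)]; push_cast; ring
    linear_combination (-(2 : ℂ) * I) * hs - (Real.sqrt (r / 2) : ℂ) ^ 2 * I_sq
  -- the principal square root is the one with positive real part
  rw [hsq, one_div, sq_cpow_two_inv]
  simpa using hr

theorem arg_exp_of_im_mem {z : ℂ} (h₁ : -Real.pi < z.im) (h₂ : z.im ≤ Real.pi) :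
    arg (exp z) = z.im := by
  rw [← log_im, log_exp h₁ h₂]

theorem diffusion_phase_general (μ x_r : ℝ) (hμ : 0 < μ) (ω : ℝ) (hω : 0 ≤ ω)
    (hπ : Real.sqrt (x_r ^ 2 * ω / (2 * μ)) < Real.pi) :
    Complex.arg (Complex.exp (-((((x_r ^ 2 / μ) : ℝ) * (ω : ℝ) * Complex.I) ^ ((1 : ℂ) / 2)))) =
      -Real.sqrt (x_r ^ 2 * ω / (2 * μ)) := by
  have hr : 0 ≤ x_r ^ 2 / μ * ω := by positivity
  have hhalf : x_r ^ 2 / μ * ω / 2 = x_r ^ 2 * ω / (2 * μ) := by ring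
  have hc : 0 ≤ Real.sqrt (x_r ^ 2 * ω / (2 * μ)) := Real.sqrt_nonneg _
  rw [← ofReal_mul, ofReal_mul_I_cpow_half hr, hhalf, arg_exp_of_im_mem] <;>
    simp <;> linarith

theorem diffusion_phase (μ x_r : ℝ) (hμ : 0 < μ) (hx : 0 ≤ x_r) (ω : ℝ) (hω : 0 ≤ ω)
    (hπ : Real.sqrt (x_r ^ 2 * ω / (2 * μ)) < Real.pi) :
    Complex.arg (Complex.exp (-((((x_r ^ 2 / μ) : ℝ) * (ω : ℝ) * Complex.I) ^ ((1 : ℂ) / 2)))) =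
      -Real.sqrt (x_r ^ 2 * ω / (2 * μ)) :=
  diffusion_phase_general μ x_r hμ ω hω hπ
end

section
/- Let μ > 0, x_r ≥ 0, and define the logarithmic gain of the diffusion system by g_G(ω) = 20·log₁₀(|exp(−((x_r²/μ)·ω·I)^(1/2))|) for ω > 0. Then for all real 0 < ω₁ ≤ ω₂, the amplitude distortion Q_G := (sup of g_G over [ω₁, ω₂]) − (inf of g_G over [ω₁, ω₂]) satisfies Q_G = g_G(ω₁) − g_G(ω₂) = 20·√(x_r²/(2μ))·(√ω₂ − √ω₁)·log₁₀(e). (Proposition 1, amplitude distortion.) -/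
open Complex

/-! For `r ≥ 0` the principal square root of `r i` has real part `√(r / 2)`, so with `c = x_r² / μ`
the gain is `g_G(ω) = -20 √(c / 2) log₁₀ e · √ω`, an antitone function of `ω`. Its supremum and
infimum over `[ω₁, ω₂]` are therefore attained at `ω₁` and `ω₂` respectively. -/

open Set

lemma AntitoneOn.csSup_sub_csInf_image_Icc {α β : Type*} [Preorder α]
    [ConditionallyCompleteLattice β] [Sub β] {f : α → β} {a b : α} (hab : a ≤ b)
    (hf : AntitoneOn f (Icc a b)) :
    sSup (f '' Icc a b) - sInf (f '' Icc a b) = f a - f b := by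
  rw [(hf.map_isLeast (isLeast_Icc hab)).csSup_eq,
    (hf.map_isGreatest (isGreatest_Icc hab)).csInf_eq]

namespace Complex

lemma re_cpow_one_div_two_ofReal_mul_I {r : ℝ} (hr : 0 ≤ r) :
    (((r : ℂ) * I) ^ ((1 : ℂ) / 2)).re = √(r / 2) := by
  simp [one_div, cpow_inv_two_re, abs_of_nonneg hr]

lemma norm_exp_neg_cpow_one_div_two_ofReal_mul_I {r : ℝ} (hr : 0 ≤ r) :
    ‖exp (-((r : ℂ) * I) ^ ((1 : ℂ) / 2))‖ = Real.exp (-√(r / 2)) := by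
  rw [norm_exp, neg_re, re_cpow_one_div_two_ofReal_mul_I hr]

lemma logb_norm_exp_neg_cpow_one_div_two_ofReal_mul_ofReal_mul_I {c ω : ℝ} (hc : 0 ≤ c)
    (hω : 0 ≤ ω) :
    Real.logb 10 ‖exp (-((c : ℂ) * ω * I) ^ ((1 : ℂ) / 2))‖ =
      -(√(c / 2) * Real.logb 10 (Real.exp 1)) * √ω := by
  have hcω : 0 ≤ c * ω := mul_nonneg hc hω
  rw [← ofReal_mul, norm_exp_neg_cpow_one_div_two_ofReal_mul_I hcω, mul_div_right_comm,
    Real.sqrt_mul (div_nonneg hc zero_le_two), Real.logb, Real.logb, Real.log_exp, Real.log_exp]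
  ring

end Complex

theorem diffusion_amplitude_distortion_general (μ x_r : ℝ) (hμ : 0 < μ)
    (ω₁ ω₂ : ℝ) (hω₁ : 0 < ω₁) (h12 : ω₁ ≤ ω₂)
    (g_G : ℝ → ℝ)
    (hg : ∀ ω > (0 : ℝ), g_G ω =
      20 * Real.logb 10 (‖Complex.exp
        (-((((x_r ^ 2 / μ) : ℝ) * (ω : ℝ) * Complex.I) ^ ((1 : ℂ) / 2)))‖)) :
    sSup (g_G '' Set.Icc ω₁ ω₂) - sInf (g_G '' Set.Icc ω₁ ω₂) = g_G ω₁ - g_G ω₂ ∧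
    g_G ω₁ - g_G ω₂ =
      20 * Real.sqrt (x_r ^ 2 / (2 * μ)) * (Real.sqrt ω₂ - Real.sqrt ω₁) *
        Real.logb 10 (Real.exp 1) := by
  set k := 20 * √(x_r ^ 2 / (2 * μ)) * Real.logb 10 (Real.exp 1)
  have hk : 0 ≤ k := mul_nonneg (by positivity)
    (Real.logb_nonneg (by norm_num) (Real.one_le_exp zero_le_one))
  have hgain : ∀ ω > 0, g_G ω = -k * √ω := fun ω hω => by
    rw [hg ω hω, logb_norm_exp_neg_cpow_one_div_two_ofReal_mul_ofReal_mul_I (by positivity) hω.le,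
      div_div, mul_comm μ]
    ring
  have hanti : AntitoneOn g_G (Icc ω₁ ω₂) := fun a ha b hb hab => by
    rw [hgain a (hω₁.trans_le ha.1), hgain b (hω₁.trans_le hb.1)]
    exact mul_le_mul_of_nonpos_left (Real.sqrt_le_sqrt hab) (neg_nonpos.2 hk)
  refine ⟨hanti.csSup_sub_csInf_image_Icc h12, ?_⟩
  rw [hgain ω₁ hω₁, hgain ω₂ (hω₁.trans_le h12)]
  ring

theorem diffusion_amplitude_distortion (μ x_r : ℝ) (hμ : 0 < μ) (hx : 0 ≤ x_r)
    (ω₁ ω₂ : ℝ) (hω₁ : 0 < ω₁) (h12 : ω₁ ≤ ω₂)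
    (g_G : ℝ → ℝ)
    (hg : ∀ ω > (0 : ℝ), g_G ω =
      20 * Real.logb 10 (‖Complex.exp
        (-((((x_r ^ 2 / μ) : ℝ) * (ω : ℝ) * Complex.I) ^ ((1 : ℂ) / 2)))‖)) :
    sSup (g_G '' Set.Icc ω₁ ω₂) - sInf (g_G '' Set.Icc ω₁ ω₂) = g_G ω₁ - g_G ω₂ ∧
    g_G ω₁ - g_G ω₂ =
      20 * Real.sqrt (x_r ^ 2 / (2 * μ)) * (Real.sqrt ω₂ - Real.sqrt ω₁) *
        Real.logb 10 (Real.exp 1) :=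
  diffusion_amplitude_distortion_general μ x_r hμ ω₁ ω₂ hω₁ h12 g_G hg
end

section
/- Let k_r > 0 be real, define τ_H(ω) = arctan(ω/k_r)/ω for ω > 0, and let 0 < ω₁ ≤ ω₂ be reals. Then the delay distortion R_H := (1/T₁)·((sup of τ_H over [ω₁, ω₂]) − (inf of τ_H over [ω₁, ω₂])) with T₁ = 2π/ω₁ satisfies R_H = (τ_H(ω₁) − τ_H(ω₂))/T₁ = (1/(2π))·(arctan(ω₁/k_r) − (ω₁/ω₂)·arctan(ω₂/k_r)). (Proposition 2, delay distortion.) -/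
/-! The phase delay `ω ↦ arctan (ω / k_r) / ω` is the slope of the chord from the origin to the
graph of the concave function `ω ↦ arctan (ω / k_r)`, hence decreasing in `ω`. On `[ω₁, ω₂]` its
supremum is therefore attained at `ω₁` and its infimum at `ω₂`. -/

open Set

theorem ConcaveOn.antitoneOn_div_self {𝕜 : Type*} [Field 𝕜] [LinearOrder 𝕜] [IsStrictOrderedRing 𝕜]
    {f : 𝕜 → 𝕜} (hf : ConcaveOn 𝕜 (Ici 0) f) (h0 : 0 ≤ f 0) :
    AntitoneOn (fun x => f x / x) (Ioi 0) := by
  intro a (ha : 0 < a) b (hb : 0 < b) hab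
  -- `a` is the convex combination `(a / b) • b + (1 - a / b) • 0`
  have hchord : a / b * f b + (1 - a / b) * f 0 ≤ f a := by
    have h := hf.2 (mem_Ici.2 hb.le) (mem_Ici.2 le_rfl) (div_pos ha hb).le
      (sub_nonneg.2 ((div_le_one hb).2 hab)) (add_sub_cancel _ _)
    simpa only [smul_eq_mul, mul_zero, add_zero, div_mul_cancel₀ a hb.ne'] using h
  have hweight : 0 ≤ (1 - a / b) * f 0 := mul_nonneg (sub_nonneg.2 ((div_le_one hb).2 hab)) h0
  calc f b / b = a / b * f b / a := by field_simp
    _ ≤ f a / a := by gcongr; linarith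

theorem Real.concaveOn_arctan_Ici : ConcaveOn ℝ (Ici 0) Real.arctan := by
  refine AntitoneOn.concaveOn_of_deriv (convex_Ici 0) Real.continuous_arctan.continuousOn
    Real.differentiable_arctan.differentiableOn ?_
  rw [interior_Ici, Real.deriv_arctan]
  intro x hx y _ hxy
  exact one_div_le_one_div_of_le (by positivity)
    (add_le_add_right (pow_le_pow_left₀ (le_of_lt hx) hxy 2) 1)

theorem Real.antitoneOn_arctan_div_self : AntitoneOn (fun x => Real.arctan x / x) (Ioi 0) :=
  Real.concaveOn_arctan_Ici.antitoneOn_div_self (by simp)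

theorem Real.antitoneOn_arctan_div_div_self {k : ℝ} (hk : 0 < k) :
    AntitoneOn (fun ω => Real.arctan (ω / k) / ω) (Ioi 0) := by
  intro a ha b hb hab
  have hrescale : ∀ ω : ℝ, ω ≠ 0 → Real.arctan (ω / k) / ω =
      Real.arctan (ω / k) / (ω / k) / k := by
    intro ω hω
    field_simp
  simp only [hrescale a (ne_of_gt ha), hrescale b (ne_of_gt hb)]
  exact div_le_div_of_nonneg_right (Real.antitoneOn_arctan_div_self (div_pos ha hk)
    (div_pos hb hk) (div_le_div_of_nonneg_right hab hk.le)) hk.le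

theorem reception_delay_distortion (k_r : ℝ) (hkr : 0 < k_r) (τ_H : ℝ → ℝ)
    (hτ : ∀ ω > (0 : ℝ), τ_H ω = Real.arctan (ω / k_r) / ω)
    (ω₁ ω₂ : ℝ) (hω₁ : 0 < ω₁) (h12 : ω₁ ≤ ω₂)
    (T₁ : ℝ) (hT₁ : T₁ = 2 * Real.pi / ω₁) :
    (1 / T₁) * (sSup (τ_H '' Set.Icc ω₁ ω₂) - sInf (τ_H '' Set.Icc ω₁ ω₂)) =
      (τ_H ω₁ - τ_H ω₂) / T₁ ∧
    (τ_H ω₁ - τ_H ω₂) / T₁ =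
      (1 / (2 * Real.pi)) *
        (Real.arctan (ω₁ / k_r) - (ω₁ / ω₂) * Real.arctan (ω₂ / k_r)) := by
  have hω₂ : 0 < ω₂ := hω₁.trans_le h12
  have hanti : AntitoneOn τ_H (Icc ω₁ ω₂) :=
    ((Real.antitoneOn_arctan_div_div_self hkr).mono (Icc_subset_Ioi_iff h12 |>.2 hω₁)).congr
      fun ω hω => (hτ ω (hω₁.trans_le hω.1)).symm
  refine ⟨?_, ?_⟩
  · rw [hanti.sSup_image_Icc h12, hanti.sInf_image_Icc h12]
    ring
  · rw [hτ ω₁ hω₁, hτ ω₂ hω₂, hT₁]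
    field_simp
end

section
/- Let μ > 0, x_r ≥ 0, k_f > 0, r > 0, k_r > 0, and 0 < ω₁ ≤ ω₂ be real numbers. Define g_G(ω) = −20·√(x_r²·ω/(2μ))·log₁₀(e), g_H(ω) = 20·log₁₀(k_f·r/√(ω² + k_r²)), and g_M = g_G + g_H. Then the amplitude distortion of the combined MC channel decomposes additively: (sup of g_M over [ω₁, ω₂]) − (inf of g_M over [ω₁, ω₂]) = [g_G(ω₁) − g_G(ω₂)] + [g_H(ω₁) − g_H(ω₂)], i.e., Q_M = Q_G + Q_H. -/
/-! Both gains are non-increasing in `ω > 0`, hence so is `g_M`; its maximum and minimum on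
`[ω₁, ω₂]` are therefore attained at `ω₁` and `ω₂`, and the difference splits termwise. -/

open Real Set

lemma antitone_neg_mul_sqrt_div_mul {a c d L : ℝ} (ha : 0 ≤ a) (hc : 0 ≤ c) (hd : 0 ≤ d)
    (hL : 0 ≤ L) : Antitone fun ω : ℝ => -(c * √(a * ω / d) * L) := by
  intro ω ω' hωω'
  dsimp only
  gcongr

lemma antitoneOn_mul_logb_div_sqrt_sq_add_sq {b c m k : ℝ} (hb : 1 < b) (hc : 0 ≤ c)
    (hm : 0 < m) : AntitoneOn (fun ω : ℝ => c * logb b (m / √(ω ^ 2 + k ^ 2))) (Ioi 0) := by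
  intro ω (hω : 0 < ω) ω' (hω' : 0 < ω') hωω'
  dsimp only
  gcongr

theorem mc_amplitude_distortion_additive_general (μ x_r k_f r k_r : ℝ)
    (hμ : 0 < μ) (hkf : 0 < k_f) (hr : 0 < r)
    (ω₁ ω₂ : ℝ) (hω₁ : 0 < ω₁) (h12 : ω₁ ≤ ω₂)
    (g_G g_H g_M : ℝ → ℝ)
    (hG : ∀ ω : ℝ, g_G ω =
      -(20 * Real.sqrt (x_r ^ 2 * ω / (2 * μ)) * Real.logb 10 (Real.exp 1)))
    (hH : ∀ ω : ℝ, g_H ω = 20 * Real.logb 10 (k_f * r / Real.sqrt (ω ^ 2 + k_r ^ 2)))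
    (hM : g_M = g_G + g_H) :
    sSup (g_M '' Set.Icc ω₁ ω₂) - sInf (g_M '' Set.Icc ω₁ ω₂) =
      (g_G ω₁ - g_G ω₂) + (g_H ω₁ - g_H ω₂) := by
  have hG_anti : Antitone g_G := by
    rw [funext hG]
    exact antitone_neg_mul_sqrt_div_mul (sq_nonneg x_r) (by norm_num) (by positivity)
      (logb_nonneg (by norm_num) (one_le_exp zero_le_one))
  have hH_anti : AntitoneOn g_H (Ioi 0) := by
    rw [funext hH]
    exact antitoneOn_mul_logb_div_sqrt_sq_add_sq (by norm_num) (by norm_num) (mul_pos hkf hr)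
  have hM_anti : AntitoneOn g_M (Icc ω₁ ω₂) := hM ▸
    (hG_anti.antitoneOn _).add (hH_anti.mono fun ω hω => hω₁.trans_le hω.1)
  rw [hM_anti.sSup_image_Icc h12, hM_anti.sInf_image_Icc h12, hM, Pi.add_apply, Pi.add_apply]
  ring

theorem mc_amplitude_distortion_additive (μ x_r k_f r k_r : ℝ)
    (hμ : 0 < μ) (hx : 0 ≤ x_r) (hkf : 0 < k_f) (hr : 0 < r) (hkr : 0 < k_r)
    (ω₁ ω₂ : ℝ) (hω₁ : 0 < ω₁) (h12 : ω₁ ≤ ω₂)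
    (g_G g_H g_M : ℝ → ℝ)
    (hG : ∀ ω : ℝ, g_G ω =
      -(20 * Real.sqrt (x_r ^ 2 * ω / (2 * μ)) * Real.logb 10 (Real.exp 1)))
    (hH : ∀ ω : ℝ, g_H ω = 20 * Real.logb 10 (k_f * r / Real.sqrt (ω ^ 2 + k_r ^ 2)))
    (hM : g_M = g_G + g_H) :
    sSup (g_M '' Set.Icc ω₁ ω₂) - sInf (g_M '' Set.Icc ω₁ ω₂) =
      (g_G ω₁ - g_G ω₂) + (g_H ω₁ - g_H ω₂) :=
  mc_amplitude_distortion_additive_general μ x_r k_f r k_r hμ hkf hr ω₁ ω₂ hω₁ h12 g_G g_H g_M hG hH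
    hM
end

section
/- Let μ > 0, x_r ≥ 0, k_r > 0, and 0 < ω₁ ≤ ω₂ be real numbers. Define τ_G(ω) = √(x_r²/(2μω)), τ_H(ω) = arctan(ω/k_r)/ω, and τ_M = τ_G + τ_H on (0, ∞). Then the delay distortion of the combined MC channel decomposes additively: (sup of τ_M over [ω₁, ω₂]) − (inf of τ_M over [ω₁, ω₂]) = [τ_G(ω₁) − τ_G(ω₂)] + [τ_H(ω₁) − τ_H(ω₂)], i.e., R_M = R_G + R_H. -/
/-!
Both delays decrease in `ω`: `τ_G` visibly, and `τ_H` because `arctan` is strictly concave on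
`[0, ∞)` with `arctan 0 = 0`, so its secant slope `arctan x / x` from the origin decreases.
Hence `τ_M` is antitone, its supremum and infimum over `[ω₁, ω₂]` are its values at the endpoints,
and the range of `τ_M` splits into those of `τ_G` and `τ_H`.
-/

open Real Set

theorem Real.strictConcaveOn_arctan : StrictConcaveOn ℝ (Ici 0) arctan := by
  refine StrictAntiOn.strictConcaveOn_of_deriv (convex_Ici 0) continuous_arctan.continuousOn ?_
  rw [deriv_arctan, interior_Ici]
  intro x hx y _ hxy
  have hsq : x ^ 2 < y ^ 2 := by gcongr; exact le_of_lt hx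
  dsimp only
  gcongr

theorem Real.strictAntiOn_arctan_div_self : StrictAntiOn (fun x => arctan x / x) (Ioi 0) := by
  intro x hx y hy hxy
  simpa using strictConcaveOn_arctan.secant_strict_mono self_mem_Ici (mem_Ici.2 (le_of_lt hx))
    (mem_Ici.2 (le_of_lt hy)) hx.ne' hy.ne' hxy

theorem Real.strictAntiOn_arctan_div_const_div_self {k : ℝ} (hk : 0 < k) :
    StrictAntiOn (fun ω => arctan (ω / k) / ω) (Ioi 0) := by
  intro x hx y hy hxy
  have hrescale : ∀ ω : ℝ, 0 < ω → arctan (ω / k) / ω = arctan (ω / k) / (ω / k) / k := by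
    intro ω hω
    field_simp
  simp only [hrescale x hx, hrescale y hy]
  exact div_lt_div_of_pos_right
    (strictAntiOn_arctan_div_self (div_pos hx hk) (div_pos hy hk) (div_lt_div_of_pos_right hxy hk))
    hk

theorem Real.antitoneOn_sqrt_const_div {c : ℝ} (hc : 0 ≤ c) :
    AntitoneOn (fun ω => √(c / ω)) (Ioi 0) :=
  fun _ hx _ _ hxy => sqrt_le_sqrt (div_le_div_of_nonneg_left hc hx hxy)

theorem mc_delay_distortion_additive_general (μ x_r k_r : ℝ)
    (hμ : 0 < μ) (hkr : 0 < k_r)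
    (ω₁ ω₂ : ℝ) (hω₁ : 0 < ω₁) (h12 : ω₁ ≤ ω₂)
    (τ_G τ_H τ_M : ℝ → ℝ)
    (hG : ∀ ω > (0 : ℝ), τ_G ω = Real.sqrt (x_r ^ 2 / (2 * μ * ω)))
    (hH : ∀ ω > (0 : ℝ), τ_H ω = Real.arctan (ω / k_r) / ω)
    (hM : ∀ ω > (0 : ℝ), τ_M ω = τ_G ω + τ_H ω) :
    sSup (τ_M '' Set.Icc ω₁ ω₂) - sInf (τ_M '' Set.Icc ω₁ ω₂) =
      (τ_G ω₁ - τ_G ω₂) + (τ_H ω₁ - τ_H ω₂) := by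
  have hω₂ : 0 < ω₂ := hω₁.trans_le h12
  have hG_anti : AntitoneOn τ_G (Ioi 0) :=
    (antitoneOn_sqrt_const_div (c := x_r ^ 2 / (2 * μ)) (by positivity)).congr fun ω hω => by
      simp only [hG ω hω, div_mul_eq_div_div]
  have hH_anti : AntitoneOn τ_H (Ioi 0) :=
    (strictAntiOn_arctan_div_const_div_self hkr).antitoneOn.congr fun ω hω => (hH ω hω).symm
  have hM_anti : AntitoneOn τ_M (Icc ω₁ ω₂) :=
    ((hG_anti.add hH_anti).congr fun ω hω => (hM ω hω).symm).mono
      fun ω hω => hω₁.trans_le hω.1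
  rw [hM_anti.sSup_image_Icc h12, hM_anti.sInf_image_Icc h12, hM ω₁ hω₁, hM ω₂ hω₂]
  ring

theorem mc_delay_distortion_additive (μ x_r k_r : ℝ)
    (hμ : 0 < μ) (hx : 0 ≤ x_r) (hkr : 0 < k_r)
    (ω₁ ω₂ : ℝ) (hω₁ : 0 < ω₁) (h12 : ω₁ ≤ ω₂)
    (τ_G τ_H τ_M : ℝ → ℝ)
    (hG : ∀ ω > (0 : ℝ), τ_G ω = Real.sqrt (x_r ^ 2 / (2 * μ * ω)))
    (hH : ∀ ω > (0 : ℝ), τ_H ω = Real.arctan (ω / k_r) / ω)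
    (hM : ∀ ω > (0 : ℝ), τ_M ω = τ_G ω + τ_H ω) :
    sSup (τ_M '' Set.Icc ω₁ ω₂) - sInf (τ_M '' Set.Icc ω₁ ω₂) =
      (τ_G ω₁ - τ_G ω₂) + (τ_H ω₁ - τ_H ω₂) :=
  mc_delay_distortion_additive_general μ x_r k_r hμ hkr ω₁ ω₂ hω₁ h12 τ_G τ_H τ_M hG hH hM
end

section
/- Let λ > 0 and ω₂ > 0 be real numbers, and define φ(ω₁) = (ω₁/(2π))·λ·(1/√ω₁ − 1/√ω₂) for ω₁ ∈ (0, ω₂]. Then φ attains its maximum on (0, ω₂] uniquely at ω₁ = ω₂/4; i.e., for all ω₁ ∈ (0, ω₂] with ω₁ ≠ ω₂/4, φ(ω₁) < φ(ω₂/4). -/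
/-! With `s = √x` and `b = √c`, the profile `x (1/√x - 1/√c) = s - s²/b` is a concave quadratic in `s`,
namely `b/4 - (s - b/2)²/b`. It is therefore maximal exactly at `s = b/2`, i.e. at `x = c/4`. -/

open Real

lemma mul_one_div_sqrt_sub_one_div_sqrt (x c : ℝ) : x * (1 / √x - 1 / √c) = √x - x / √c := by
  rw [mul_sub, mul_one_div, mul_one_div, div_sqrt]

lemma sqrt_sub_div_sqrt_eq (x : ℝ) {c : ℝ} (hx : 0 ≤ x) (hc : 0 < c) :
    √x - x / √c = √c / 4 - (√x - √c / 2) ^ 2 / √c := by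
  have hb : 0 < √c := sqrt_pos.mpr hc
  nth_rw 2 [← sq_sqrt hx]
  field_simp
  ring

lemma sqrt_div_four_sub_div_sqrt (c : ℝ) : √(c / 4) - c / 4 / √c = √c / 4 := by
  have hsqrt_four : √(4 : ℝ) = 2 := by
    rw [show (4 : ℝ) = 2 ^ 2 by norm_num, sqrt_sq zero_le_two]
  rw [sqrt_div' c (by norm_num : (0 : ℝ) ≤ 4), hsqrt_four, div_right_comm, div_sqrt]
  ring

lemma sqrt_sub_div_sqrt_lt {x c : ℝ} (hx : 0 ≤ x) (hc : 0 < c) (hne : x ≠ c / 4) :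
    √x - x / √c < √(c / 4) - c / 4 / √c := by
  have hsqrt_ne : √x - √c / 2 ≠ 0 := by
    intro h
    apply hne
    rw [← sq_sqrt hx, sub_eq_zero.mp h, div_pow, sq_sqrt hc.le]
    norm_num
  rw [sqrt_div_four_sub_div_sqrt, sqrt_sub_div_sqrt_eq x hx hc, sub_lt_self_iff]
  have hb : 0 < √c := sqrt_pos.mpr hc
  positivity

theorem diffusion_delay_distortion_max_general (lam ω₂ : ℝ) (hlam : 0 < lam)
    (φ : ℝ → ℝ)
    (hφ : ∀ ω₁ ∈ Set.Ioc (0 : ℝ) ω₂,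
      φ ω₁ = (ω₁ / (2 * Real.pi)) * lam * (1 / Real.sqrt ω₁ - 1 / Real.sqrt ω₂)) :
    ∀ ω₁ ∈ Set.Ioc (0 : ℝ) ω₂, ω₁ ≠ ω₂ / 4 → φ ω₁ < φ (ω₂ / 4) := by
  rintro ω₁ ⟨hω₁, hω₁₂⟩ hne
  have hω₂ : 0 < ω₂ := hω₁.trans_le hω₁₂
  have hφ_eq : ∀ x ∈ Set.Ioc (0 : ℝ) ω₂, φ x = lam / (2 * π) * (√x - x / √ω₂) := by
    intro x hx
    rw [hφ x hx, ← mul_one_div_sqrt_sub_one_div_sqrt]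
    ring
  rw [hφ_eq ω₁ ⟨hω₁, hω₁₂⟩, hφ_eq (ω₂ / 4) ⟨by positivity, by linarith⟩]
  exact mul_lt_mul_of_pos_left (sqrt_sub_div_sqrt_lt hω₁.le hω₂ hne) (by positivity)

theorem diffusion_delay_distortion_max (lam ω₂ : ℝ) (hlam : 0 < lam) (hω₂ : 0 < ω₂)
    (φ : ℝ → ℝ)
    (hφ : ∀ ω₁ ∈ Set.Ioc (0 : ℝ) ω₂,
      φ ω₁ = (ω₁ / (2 * Real.pi)) * lam * (1 / Real.sqrt ω₁ - 1 / Real.sqrt ω₂)) :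
    ∀ ω₁ ∈ Set.Ioc (0 : ℝ) ω₂, ω₁ ≠ ω₂ / 4 → φ ω₁ < φ (ω₂ / 4) :=
  diffusion_delay_distortion_max_general lam ω₂ hlam φ hφ
end

section
/- Let ω₂ > 0 be a real number, and define ψ(ω₁) = (1/(2π))·(arctan(ω₁) − (ω₁/ω₂)·arctan(ω₂)) for ω₁ ∈ (0, ω₂]. Let ω₁* = √(ω₂/arctan(ω₂) − 1). Then 0 < ω₁* ≤ ω₂, and ψ attains its maximum on (0, ω₂] uniquely at ω₁ = ω₁*; i.e., for all ω₁ ∈ (0, ω₂] with ω₁ ≠ ω₁*, ψ(ω₁) < ψ(ω₁*). -/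
/-!
With `c = arctan ω₂ / ω₂`, `ψ` is a positive multiple of `x ↦ arctan x - c x`, whose derivative
`1 / (1 + x²) - c` is positive below `√(1/c - 1)` and negative above it; that point is therefore the
unique maximiser on `[0, ∞)`. It lies in `(0, ω₂]` because the function vanishes both at `0` and
at `ω₂`, which it could not if it were strictly monotone on `[0, ω₂]`.
-/

open Real Set

namespace Real

theorem hasDerivAt_arctan_sub_mul (c x : ℝ) :
    HasDerivAt (fun x => arctan x - c * x) (1 / (1 + x ^ 2) - c) x :=
  ((hasDerivAt_arctan x).sub ((hasDerivAt_id' x).const_mul c)).congr_deriv (by rw [mul_one])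

theorem continuous_arctan_sub_mul (c : ℝ) : Continuous fun x => arctan x - c * x := by
  fun_prop

variable {c : ℝ}

theorem strictMonoOn_arctan_sub_mul (hc : 0 < c) :
    StrictMonoOn (fun x => arctan x - c * x) (Icc 0 √(1 / c - 1)) := by
  refine strictMonoOn_of_deriv_pos (convex_Icc _ _) (continuous_arctan_sub_mul c).continuousOn ?_
  intro x hx
  rw [interior_Icc] at hx
  have hx_sq : x ^ 2 < 1 / c - 1 := (lt_sqrt hx.1.le).mp hx.2
  rw [lt_sub_iff_add_lt', lt_div_iff₀' hc] at hx_sq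
  rw [(hasDerivAt_arctan_sub_mul c x).deriv, sub_pos, lt_div_iff₀ (by positivity)]
  exact hx_sq

theorem strictAntiOn_arctan_sub_mul (hc : 0 < c) :
    StrictAntiOn (fun x => arctan x - c * x) (Ici √(1 / c - 1)) := by
  refine strictAntiOn_of_deriv_neg (convex_Ici _) (continuous_arctan_sub_mul c).continuousOn ?_
  intro x hx
  rw [interior_Ici] at hx
  have hx_sq : 1 / c - 1 < x ^ 2 := lt_sq_of_sqrt_lt hx
  rw [sub_lt_iff_lt_add', div_lt_iff₀' hc] at hx_sq
  rw [(hasDerivAt_arctan_sub_mul c x).deriv, sub_neg, div_lt_iff₀ (by positivity)]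
  exact hx_sq

theorem arctan_sub_mul_lt_of_ne (hc : 0 < c) {x : ℝ} (hx : 0 ≤ x) (hne : x ≠ √(1 / c - 1)) :
    arctan x - c * x < arctan √(1 / c - 1) - c * √(1 / c - 1) := by
  rcases hne.lt_or_gt with hlt | hgt
  · exact strictMonoOn_arctan_sub_mul hc ⟨hx, hlt.le⟩ ⟨sqrt_nonneg _, le_rfl⟩ hlt
  · exact strictAntiOn_arctan_sub_mul hc self_mem_Ici hgt.le hgt

theorem sqrt_one_div_sub_one_mem_Ioc {b : ℝ} (hc : 0 < c) (hb : 0 < b) (h : arctan b = c * b) :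
    √(1 / c - 1) ∈ Ioc 0 b := by
  have hb_zero : arctan b - c * b = arctan 0 - c * 0 := by simp [h]
  constructor
  · by_contra! hle
    have hanti := strictAntiOn_arctan_sub_mul hc
    rw [le_antisymm hle (sqrt_nonneg _)] at hanti
    exact (hanti self_mem_Ici hb.le hb).ne hb_zero
  · by_contra! hlt
    exact (strictMonoOn_arctan_sub_mul hc ⟨le_rfl, sqrt_nonneg _⟩ ⟨hb.le, hlt.le⟩ hb).ne
      hb_zero.symm

end Real

theorem reception_delay_distortion_max (ω₂ : ℝ) (hω₂ : 0 < ω₂)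
    (ψ : ℝ → ℝ)
    (hψ : ∀ ω₁ ∈ Set.Ioc (0 : ℝ) ω₂,
      ψ ω₁ = (1 / (2 * Real.pi)) * (Real.arctan ω₁ - (ω₁ / ω₂) * Real.arctan ω₂))
    (ω₁star : ℝ) (hstar : ω₁star = Real.sqrt (ω₂ / Real.arctan ω₂ - 1)) :
    (0 < ω₁star ∧ ω₁star ≤ ω₂) ∧
    ∀ ω₁ ∈ Set.Ioc (0 : ℝ) ω₂, ω₁ ≠ ω₁star → ψ ω₁ < ψ ω₁star := by
  set c := arctan ω₂ / ω₂
  have hc : 0 < c := div_pos (arctan_pos.mpr hω₂) hω₂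
  have hψc : ∀ ω₁ ∈ Ioc 0 ω₂, ψ ω₁ = 1 / (2 * π) * (arctan ω₁ - c * ω₁) := fun ω₁ h => by
    rw [hψ ω₁ h]; ring
  rw [← one_div_div] at hstar
  have hstar_mem : ω₁star ∈ Ioc 0 ω₂ :=
    hstar ▸ sqrt_one_div_sub_one_mem_Ioc hc hω₂ (by field_simp)
  refine ⟨hstar_mem, fun ω₁ h hne => ?_⟩
  rw [hψc ω₁ h, hψc ω₁star hstar_mem]
  subst hstar
  exact mul_lt_mul_of_pos_left (arctan_sub_mul_lt_of_ne hc h.1.le hne) (by positivity)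
end
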